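/- arXiv:1307.7271 — 8 statements merged into one kernel-verified Lean document; each statement's English description precedes it below -/
import Mathlib

section
/- Let n ≥ 3 be an integer, let π = (π_2,…,π_n) be a probability vector on {2,…,n}, and let i be an integer with 2 < i < n. Set x = ((n−i)/(n−2))·π_i and define π' by π'_2 = π_2 + x, π'_i = 0, π'_n = π_n + π_i − x, and π'_l = π_l for all other l. Then: (a) π' is again a probability vector on {2,…,n}; (b) π' has the same mean as π, i.e., Σ_{l=2}^n l·π'_l = Σ_{l=2}^n l·π_l; and (c) the objective does not decrease: Σ_{l=2}^n π'_l/l ≥ Σ_{l=2}^n π_l/l, i.e., (1/2)π_2 + (1/i)π_i + (1/n)π_n ≤ (1/2)(π_2 + x) + (1/n)(π_n + π_i − x). -/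
/-!
Write `i = t·2 + (1 - t)·n` with `t = (n - i)/(n - 2) ∈ [0, 1]`. Then `x = t·π_i`, so the move
splits the atom at `i` into the masses `t·π_i` at `2` and `(1 - t)·π_i` at `n`: total mass and
mean are unchanged, and the objective changes by `π_i·(t/2 + (1 - t)/n - 1/i) ≥ 0` by convexity
of `l ↦ 1/l`.
-/

open Finset

theorem Finset.sum_mul_ite_ite_ite {ι R : Type*} [DecidableEq ι] [CommRing R] {s : Finset ι}
    {a b c : ι} (ha : a ∈ s) (hb : b ∈ s) (hc : c ∈ s) (hab : a ≠ b) (hac : a ≠ c)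
    (hbc : b ≠ c) (f g : ι → R) (u v w : R) :
    ∑ l ∈ s, g l * (if l = a then u else if l = b then v else if l = c then w else f l) =
      ∑ l ∈ s, g l * f l + (g a * (u - f a) + g b * (v - f b) + g c * (w - f c)) := by
  have hsplit : ∀ l, (if l = a then u else if l = b then v else if l = c then w else f l) =
      f l + ((if l = a then u - f a else 0) + (if l = b then v - f b else 0) +
        (if l = c then w - f c else 0)) := by
    intro l
    split_ifs <;> subst_vars <;> simp_all
  simp only [hsplit, mul_add, sum_add_distrib, mul_ite, mul_zero, sum_ite_eq', ha, hb, hc,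
    if_true]

section SecantWeight

variable {𝕜 : Type*} [Field 𝕜] [LinearOrder 𝕜] [IsStrictOrderedRing 𝕜] {a b c : 𝕜}

theorem secant_weight_nonneg (hbc : b ≤ c) (hac : a < c) : 0 ≤ (c - b) / (c - a) :=
  div_nonneg (by linarith) (by linarith)

theorem secant_weight_le_one (hab : a ≤ b) (hac : a < c) : (c - b) / (c - a) ≤ 1 :=
  (div_le_one (by linarith)).2 (by linarith)

theorem secant_weight_combination (hac : a < c) :
    (c - b) / (c - a) * a + (1 - (c - b) / (c - a)) * c = b := by
  field_simp [sub_ne_zero.2 hac.ne']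
  ring

theorem inv_le_secant_combination (ha : 0 < a) (hab : a ≤ b) (hbc : b ≤ c) (hac : a < c) :
    b⁻¹ ≤ (c - b) / (c - a) * a⁻¹ + (1 - (c - b) / (c - a)) * c⁻¹ := by
  have h := (convexOn_zpow (𝕜 := 𝕜) (-1)).2 (Set.mem_Ioi.2 ha) (Set.mem_Ioi.2 (ha.trans hac))
    (secant_weight_nonneg hbc hac) (sub_nonneg.2 (secant_weight_le_one hab hac))
    (add_sub_cancel _ _)
  simpa only [smul_eq_mul, zpow_neg_one, secant_weight_combination hac] using h

end SecantWeight

theorem stmt3_general (n : ℕ)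
    (π : ℕ → ℝ) (hπ0 : ∀ l ∈ Finset.Icc 2 n, 0 ≤ π l)
    (hπ1 : ∑ l ∈ Finset.Icc 2 n, π l = 1)
    (i : ℕ) (hi2 : 2 < i) (hin : i < n) :
    let x : ℝ := (((n : ℝ) - (i : ℝ)) / ((n : ℝ) - 2)) * π i
    let π' : ℕ → ℝ := fun l =>
      if l = 2 then π 2 + x else if l = i then 0 else
        if l = n then π n + π i - x else π l
    -- (a) π' is again a probability vector on {2,…,n}
    ((∀ l ∈ Finset.Icc 2 n, 0 ≤ π' l) ∧ ∑ l ∈ Finset.Icc 2 n, π' l = 1) ∧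
    -- (b) π' has the same mean as π
    (∑ l ∈ Finset.Icc 2 n, (l : ℝ) * π' l = ∑ l ∈ Finset.Icc 2 n, (l : ℝ) * π l) ∧
    -- (c) the objective does not decrease
    (∑ l ∈ Finset.Icc 2 n, π l / (l : ℝ) ≤ ∑ l ∈ Finset.Icc 2 n, π' l / (l : ℝ)) := by
  intro x π'
  have h2i : (2 : ℝ) < i := by exact_mod_cast hi2
  have hin' : (i : ℝ) < n := by exact_mod_cast hin
  have h2n : (2 : ℝ) < n := h2i.trans hin'
  have h2mem : 2 ∈ Icc 2 n := mem_Icc.2 ⟨le_rfl, by omega⟩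
  have himem : i ∈ Icc 2 n := mem_Icc.2 ⟨by omega, by omega⟩
  have hnmem : n ∈ Icc 2 n := mem_Icc.2 ⟨by omega, le_rfl⟩
  have hπ2 := hπ0 2 h2mem
  have hπi := hπ0 i himem
  have hπn := hπ0 n hnmem
  have hx0 : 0 ≤ x := mul_nonneg (secant_weight_nonneg hin'.le h2n) hπi
  have hxi : x ≤ π i := mul_le_of_le_one_left hπi (secant_weight_le_one h2i.le h2n)
  have hsum (g : ℕ → ℝ) : ∑ l ∈ Icc 2 n, g l * π' l =
      ∑ l ∈ Icc 2 n, g l * π l + (g 2 * x + g n * (π i - x) - g i * π i) := by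
    rw [sum_mul_ite_ite_ite h2mem himem hnmem (by omega) (by omega) (by omega)]
    ring
  refine ⟨⟨fun l hl => ?_, ?_⟩, ?_, ?_⟩
  · dsimp only [π']
    split_ifs
    exacts [by linarith, le_rfl, by linarith, hπ0 l hl]
  · simpa only [Pi.one_apply, one_mul, hπ1, add_sub_cancel, sub_self, add_zero] using hsum 1
  · rw [hsum]
    have hmean := secant_weight_combination (b := (i : ℝ)) h2n
    linear_combination π i * hmean
  · simp only [div_eq_inv_mul]
    rw [hsum]
    have hconvex := mul_le_mul_of_nonneg_left
      (inv_le_secant_combination two_pos h2i.le hin'.le h2n) hπi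
    push_cast
    linear_combination hconvex

/-- the mean-preserving redistribution of an interior atom `π_i`
(`2 < i < n`) to the two extremes `2` and `n` yields again a probability vector,
preserves the mean, and does not decrease `E[1/N] = ∑ π_l / l`. -/
theorem stmt3 (n : ℕ) (hn : 3 ≤ n)
    (π : ℕ → ℝ) (hπ0 : ∀ l ∈ Finset.Icc 2 n, 0 ≤ π l)
    (hπ1 : ∑ l ∈ Finset.Icc 2 n, π l = 1)
    (i : ℕ) (hi2 : 2 < i) (hin : i < n) :
    let x : ℝ := (((n : ℝ) - (i : ℝ)) / ((n : ℝ) - 2)) * π i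
    let π' : ℕ → ℝ := fun l =>
      if l = 2 then π 2 + x else if l = i then 0 else
        if l = n then π n + π i - x else π l
    -- (a) π' is again a probability vector on {2,…,n}
    ((∀ l ∈ Finset.Icc 2 n, 0 ≤ π' l) ∧ ∑ l ∈ Finset.Icc 2 n, π' l = 1) ∧
    -- (b) π' has the same mean as π
    (∑ l ∈ Finset.Icc 2 n, (l : ℝ) * π' l = ∑ l ∈ Finset.Icc 2 n, (l : ℝ) * π l) ∧
    -- (c) the objective does not decrease
    (∑ l ∈ Finset.Icc 2 n, π l / (l : ℝ) ≤ ∑ l ∈ Finset.Icc 2 n, π' l / (l : ℝ)) :=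
  stmt3_general n π hπ0 hπ1 i hi2 hin
end

section
/- Fix q ∈ (0,1), ε ∈ (0,1), and an integer γ ≥ 1, and let b_θ = 1 + q(e^θ − 1) for θ ∈ ℝ. Define for t > 0 the upper capacity bound λ_t^U = inf_{θ>0} { 1 + (log b_{−γθ})/(γθ) − (log ε)/(tθ) }. Then lim_{t→∞} λ_t^U = 1 − q. -/
/-!
Write `b(s) = 1 + q(e^{-s} - 1)`. Convexity of `exp` gives `e^{-qs} ≤ b(s)`, and
`log b(s) ≤ b(s) - 1 ≤ q(-s + s²)`, so `log b(s) / s` lies between `-q` and `-q + qs`.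
Hence every value of the objective is at least `1 - q` (as `log ε ≤ 0`), while evaluating it at
`θ = 1/√t` gives at most `1 - q + (qγ - log ε)/√t`, which tends to `1 - q`.
-/

open Real Filter Topology

lemma exp_mul_le_one_add_mul_exp_sub_one {q : ℝ} (hq0 : 0 ≤ q) (hq1 : q ≤ 1) (x : ℝ) :
    exp (q * x) ≤ 1 + q * (exp x - 1) := by
  have h := convexOn_exp.2 (Set.mem_univ x) (Set.mem_univ 0) hq0 (sub_nonneg.2 hq1)
    (add_sub_cancel q 1)
  simp only [smul_eq_mul, mul_zero, add_zero, exp_zero, mul_one] at h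
  linarith

lemma one_add_mul_exp_sub_one_pos {q : ℝ} (hq0 : 0 ≤ q) (hq1 : q ≤ 1) (x : ℝ) :
    0 < 1 + q * (exp x - 1) :=
  (exp_pos _).trans_le (exp_mul_le_one_add_mul_exp_sub_one hq0 hq1 x)

lemma exp_neg_le_one_sub_add_sq {s : ℝ} (hs : 0 ≤ s) : exp (-s) ≤ 1 - s + s ^ 2 := by
  -- `e^{-s} (1 + s) ≤ e^{-s} e^s = 1 ≤ (1 - s + s²)(1 + s) = 1 + s³`
  have h_inv : exp (-s) * exp s = 1 := by rw [← exp_add, neg_add_cancel, exp_zero]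
  nlinarith [add_one_le_exp s, exp_pos (-s), pow_nonneg hs 3]

lemma neg_le_log_one_add_mul_exp_neg_sub_one_div {q s : ℝ} (hq0 : 0 ≤ q) (hq1 : q ≤ 1)
    (hs : 0 < s) : -q ≤ log (1 + q * (exp (-s) - 1)) / s := by
  have h := log_le_log (exp_pos _) (exp_mul_le_one_add_mul_exp_sub_one hq0 hq1 (-s))
  rw [log_exp] at h
  rw [le_div_iff₀ hs]
  linarith

lemma log_one_add_mul_exp_neg_sub_one_div_le {q s : ℝ} (hq0 : 0 ≤ q) (hq1 : q ≤ 1)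
    (hs : 0 < s) : log (1 + q * (exp (-s) - 1)) / s ≤ -q + q * s := by
  have h := log_le_sub_one_of_pos (one_add_mul_exp_sub_one_pos hq0 hq1 (-s))
  rw [div_le_iff₀ hs]
  nlinarith [exp_neg_le_one_sub_add_sq hs.le]

/-- The objective `1 + log b_{-γθ} / (γθ) - log ε / (tθ)` minimised over `θ > 0` in `λ_t^U`. -/
noncomputable def capacityObjective (q ε γ t θ : ℝ) : ℝ :=
  1 + log (1 + q * (exp (-(γ * θ)) - 1)) / (γ * θ) - log ε / (t * θ)

section capacityObjective

variable {q ε γ t θ : ℝ}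

lemma one_sub_le_capacityObjective (hq0 : 0 ≤ q) (hq1 : q ≤ 1) (hε0 : 0 ≤ ε) (hε1 : ε ≤ 1)
    (hγ : 0 < γ) (ht : 0 ≤ t) (hθ : 0 < θ) : 1 - q ≤ capacityObjective q ε γ t θ := by
  have h_log := neg_le_log_one_add_mul_exp_neg_sub_one_div hq0 hq1 (mul_pos hγ hθ)
  have h_ε : log ε / (t * θ) ≤ 0 :=
    div_nonpos_of_nonpos_of_nonneg (log_nonpos hε0 hε1) (mul_nonneg ht hθ.le)
  unfold capacityObjective
  linarith

lemma capacityObjective_inv_sqrt_le (hq0 : 0 ≤ q) (hq1 : q ≤ 1) (hγ : 0 < γ) (ht : 0 < t) :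
    capacityObjective q ε γ t (√t)⁻¹ ≤ 1 - q + (q * γ - log ε) / √t := by
  have hθ : 0 < (√t)⁻¹ := inv_pos.2 (sqrt_pos.2 ht)
  have h_log := log_one_add_mul_exp_neg_sub_one_div_le hq0 hq1 (mul_pos hγ hθ)
  have h_tθ : t * (√t)⁻¹ = √t := by
    rw [← div_eq_mul_inv, div_sqrt]
  unfold capacityObjective
  rw [h_tθ]
  have h_split : (q * γ - log ε) / √t = q * (γ * (√t)⁻¹) - log ε / √t := by ring
  linarith

end capacityObjective

/-- with `b_θ = 1 + q(e^θ − 1)`, the upper capacity bound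
`λ_t^U = inf_{θ>0} { 1 + log(b_{−γθ})/(γθ) − log(ε)/(tθ) }` converges to the
asymptotic capacity `1 − q` as `t → ∞`. -/
theorem stmt7 (q ε : ℝ) (hq : q ∈ Set.Ioo (0 : ℝ) 1) (hε : ε ∈ Set.Ioo (0 : ℝ) 1)
    (γ : ℕ) (hγ : 1 ≤ γ) :
    Filter.Tendsto (fun t : ℝ =>
        sInf {x : ℝ | ∃ θ : ℝ, 0 < θ ∧
          x = 1 + Real.log (1 + q * (Real.exp (-((γ : ℝ) * θ)) - 1)) / ((γ : ℝ) * θ)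
              - Real.log ε / (t * θ)})
      Filter.atTop (nhds (1 - q)) := by
  obtain ⟨hq0, hq1⟩ := hq
  obtain ⟨hε0, hε1⟩ := hε
  have hγ0 : (0 : ℝ) < γ := by exact_mod_cast hγ
  have h_lower (t : ℝ) (ht : 0 ≤ t) :
      ∀ x ∈ {x | ∃ θ, 0 < θ ∧ x = capacityObjective q ε γ t θ}, 1 - q ≤ x := by
    rintro x ⟨θ, hθ, rfl⟩
    exact one_sub_le_capacityObjective hq0.le hq1.le hε0.le hε1.le hγ0 ht hθ
  have h_rate : Tendsto (fun t => 1 - q + (q * γ - log ε) / √t) atTop (𝓝 (1 - q)) := by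
    simpa using (tendsto_sqrt_atTop.const_div_atTop (q * γ - log ε)).const_add (1 - q)
  refine tendsto_of_tendsto_of_tendsto_of_le_of_le' tendsto_const_nhds h_rate ?_ ?_
  · filter_upwards [eventually_ge_atTop 0] with t ht
    exact le_csInf ⟨_, 1, one_pos, rfl⟩ (h_lower t ht)
  · filter_upwards [eventually_gt_atTop 0] with t ht
    calc _ ≤ capacityObjective q ε γ t (√t)⁻¹ :=
          csInf_le ⟨1 - q, h_lower t ht.le⟩ ⟨_, inv_pos.2 (sqrt_pos.2 ht), rfl⟩
      _ ≤ _ := capacityObjective_inv_sqrt_le hq0.le hq1.le hγ0 ht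
end

section
/- Fix q ∈ (0,1), ε ∈ (0,1), integers γ ≥ 1 and k_max ≥ 1, and a probability vector π̃ = (π̃_1,…,π̃_{k_max}). Let b_θ = 1 + q(e^θ − 1) for θ ∈ ℝ, and for integer t ≥ k_max define c_K(t) = Σ_{k=1}^{k_max} π̃_k · log( binomial(t+k−1, k−1) ) and the lower capacity bound λ_t^L = sup_{θ>0} { 1 − (log b_{γθ})/(γθ) + (log ε)/(tθ) − c_K(t)/(tθ) }. Then lim_{t→∞} λ_t^L = 1 − q. -/
/-!
Every value in the supremum is at most `1 - q`: by convexity of `exp` (Jensen for a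
Bernoulli variable) `log b_s ≥ q s`, while `log ε ≤ 0` and `c_K(t) ≥ 0`. Conversely, at
`θ = 1/√t` we have `γθ → 0`, so `log b_{γθ} / (γθ) → q` (the derivative of `log b` at `0`),
and `tθ = √t` outgrows both `log ε` and `c_K(t) = O(log t)`.
-/

open Filter Real Topology

theorem tendsto_sSup_of_forall_le_of_tendsto {ι : Type*} {l : Filter ι} {f : ι → ℝ → ℝ}
    {L : ℝ} {θ : ι → ℝ} (hle : ∀ i x, 0 < x → f i x ≤ L) (hθ : ∀ᶠ i in l, 0 < θ i)
    (hlim : Tendsto (fun i => f i (θ i)) l (𝓝 L)) :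
    Tendsto (fun i => sSup {y | ∃ x, 0 < x ∧ y = f i x}) l (𝓝 L) := by
  have hbdd (i : ι) : BddAbove {y | ∃ x, 0 < x ∧ y = f i x} := by
    refine ⟨L, ?_⟩
    rintro _ ⟨x, hx, rfl⟩
    exact hle i x hx
  refine tendsto_of_tendsto_of_tendsto_of_le_of_le' hlim tendsto_const_nhds ?_ ?_
  · filter_upwards [hθ] with i hi
    exact le_csSup (hbdd i) ⟨θ i, hi, rfl⟩
  · refine .of_forall fun i => csSup_le ⟨_, 1, one_pos, rfl⟩ ?_
    rintro _ ⟨x, hx, rfl⟩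
    exact hle i x hx

/-- The paper's `log b_s`: `b_s = 1 + q (eˢ - 1)` is the moment generating function of a
Bernoulli(`q`) variable. -/
noncomputable def bernoulliLogMGF (q s : ℝ) : ℝ := log (1 + q * (exp s - 1))

theorem mul_le_bernoulliLogMGF {q : ℝ} (hq0 : 0 ≤ q) (hq1 : q ≤ 1) (s : ℝ) :
    q * s ≤ bernoulliLogMGF q s := by
  have hconv := convexOn_exp.2 (Set.mem_univ 0) (Set.mem_univ s) (sub_nonneg.2 hq1) hq0
    (sub_add_cancel 1 q)
  simp only [smul_eq_mul, mul_zero, zero_add, exp_zero, mul_one] at hconv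
  rw [← log_exp (q * s)]
  exact log_le_log (exp_pos _) (by linarith)

theorem tendsto_bernoulliLogMGF_div (q : ℝ) :
    Tendsto (fun s => bernoulliLogMGF q s / s) (𝓝[≠] 0) (𝓝 q) := by
  have hderiv : HasDerivAt (bernoulliLogMGF q) q 0 := by
    show HasDerivAt (fun s => log (1 + q * (exp s - 1))) q 0
    simpa using ((((hasDerivAt_exp 0).sub_const 1).const_mul q).const_add 1).log (by simp)
  refine (hasDerivAt_iff_tendsto_slope.mp hderiv).congr' ?_
  filter_upwards with s
  simp [slope_def_field, bernoulliLogMGF]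

theorem tendsto_log_natCast_div_sqrt :
    Tendsto (fun t : ℕ => log t / √t) atTop (𝓝 0) := by
  have := (isLittleO_log_rpow_atTop one_half_pos).tendsto_div_nhds_zero
  simp only [← sqrt_eq_rpow] at this
  exact this.comp tendsto_natCast_atTop_atTop

theorem log_choose_add_le (a r : ℕ) {t : ℕ} (ht : 1 ≤ t) :
    log ((t + a).choose r) ≤ r * (log (a + 1) + log t) := by
  have hbound : 0 ≤ r * (log (a + 1) + log t) := by
    have := log_natCast_nonneg (a + 1)
    push_cast at this
    positivity
  rcases (Nat.cast_nonneg _ : (0 : ℝ) ≤ (t + a).choose r).eq_or_lt with hzero | hpos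
  · rwa [← hzero, log_zero]
  have hchoose : ((t + a).choose r : ℝ) ≤ ((a + 1) * t : ℝ) ^ r := by
    have : t + a ≤ (a + 1) * t := by nlinarith
    exact_mod_cast (Nat.choose_le_pow _ _).trans (Nat.pow_le_pow_left this r)
  calc log ((t + a).choose r) ≤ log (((a + 1) * t : ℝ) ^ r) := log_le_log hpos hchoose
    _ = r * (log (a + 1) + log t) := by
      rw [log_pow, log_mul (by positivity) (by positivity)]

theorem tendsto_log_choose_add_div_sqrt (a r : ℕ) :
    Tendsto (fun t : ℕ => log ((t + a).choose r) / √t) atTop (𝓝 0) := by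
  have hupper :
      Tendsto (fun t : ℕ => r * (log (a + 1) / √t + log t / √t)) atTop (𝓝 0) := by
    simpa using ((tendsto_const_nhds.div_atTop
      (tendsto_sqrt_atTop.comp tendsto_natCast_atTop_atTop)).add
      tendsto_log_natCast_div_sqrt).const_mul (r : ℝ)
  refine tendsto_of_tendsto_of_tendsto_of_le_of_le' tendsto_const_nhds hupper
    (.of_forall fun t => div_nonneg (log_natCast_nonneg _) (sqrt_nonneg _)) ?_
  filter_upwards [eventually_ge_atTop 1] with t ht
  rw [← add_div, ← mul_div_assoc]
  exact div_le_div_of_nonneg_right (log_choose_add_le a r ht) (sqrt_nonneg _)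

theorem tendsto_sum_mul_log_choose_div_sqrt (kmax : ℕ) (π' : ℕ → ℝ) :
    Tendsto (fun t : ℕ =>
      (∑ k ∈ Finset.Icc 1 kmax, π' k * log ((t + k - 1).choose (k - 1))) / √t)
      atTop (𝓝 0) := by
  simp only [Finset.sum_div, mul_div_assoc]
  simpa using tendsto_finsetSum _ fun k hk =>
    ((tendsto_log_choose_add_div_sqrt (k - 1) (k - 1)).const_mul (π' k)).congr fun t => by
      rw [Nat.add_sub_assoc (Finset.mem_Icc.1 hk).1]

theorem stmt8_general (q ε : ℝ) (hq : q ∈ Set.Ioo (0 : ℝ) 1) (hε : ε ∈ Set.Ioo (0 : ℝ) 1)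
    (γ kmax : ℕ) (hγ : 1 ≤ γ)
    (π' : ℕ → ℝ) (hπ'0 : ∀ k ∈ Finset.Icc 1 kmax, 0 ≤ π' k) :
    Filter.Tendsto (fun t : ℕ =>
        sSup {x : ℝ | ∃ θ : ℝ, 0 < θ ∧
          x = 1 - Real.log (1 + q * (Real.exp ((γ : ℝ) * θ) - 1)) / ((γ : ℝ) * θ)
              + Real.log ε / ((t : ℝ) * θ)
              - (∑ k ∈ Finset.Icc 1 kmax,
                  π' k * Real.log ((Nat.choose (t + k - 1) (k - 1) : ℝ)))
                / ((t : ℝ) * θ)})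
      Filter.atTop (nhds (1 - q)) := by
  have hγ0 : (0 : ℝ) < γ := by exact_mod_cast hγ
  refine tendsto_sSup_of_forall_le_of_tendsto (θ := fun t : ℕ => (√t)⁻¹) ?_ ?_ ?_
  · intro t θ hθ
    have hA : q ≤ bernoulliLogMGF q (γ * θ) / (γ * θ) :=
      (le_div_iff₀ (by positivity)).2 (mul_le_bernoulliLogMGF hq.1.le hq.2.le _)
    have hB : log ε / (t * θ) ≤ 0 :=
      div_nonpos_of_nonpos_of_nonneg (log_nonpos hε.1.le hε.2.le) (by positivity)
    have hC :
        0 ≤ (∑ k ∈ Finset.Icc 1 kmax, π' k * log ((t + k - 1).choose (k - 1))) / (t * θ) :=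
      div_nonneg (Finset.sum_nonneg fun k hk => mul_nonneg (hπ'0 k hk) (log_natCast_nonneg _))
        (by positivity)
    unfold bernoulliLogMGF at hA
    linarith
  · filter_upwards [eventually_gt_atTop 0] with t ht
    positivity
  · have hsqrt : Tendsto (fun t : ℕ => √t) atTop atTop :=
      tendsto_sqrt_atTop.comp tendsto_natCast_atTop_atTop
    have hs : Tendsto (fun t : ℕ => γ * (√t)⁻¹) atTop (𝓝[≠] 0) := by
      refine tendsto_nhdsWithin_iff.2
        ⟨by simpa using hsqrt.inv_tendsto_atTop.const_mul (γ : ℝ), ?_⟩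
      filter_upwards [eventually_gt_atTop 0] with t ht
      exact (by positivity : (0 : ℝ) < γ * (√t)⁻¹).ne'
    have hA := (tendsto_bernoulliLogMGF_div q).comp hs
    have hB := (tendsto_const_nhds (x := log ε)).div_atTop hsqrt
    have hmul_inv_sqrt (t : ℕ) : (t : ℝ) * (√t)⁻¹ = √t := by
      rw [← div_eq_mul_inv, div_sqrt]
    simp only [hmul_inv_sqrt]
    simpa [bernoulliLogMGF] using ((tendsto_const_nhds (x := (1 : ℝ))).sub hA).add hB |>.sub
      (tendsto_sum_mul_log_choose_div_sqrt kmax π')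

/-- with `b_θ = 1 + q(e^θ − 1)` and
`c_K(t) = ∑_{k=1}^{k_max} π̃_k log C(t+k−1, k−1)`, the lower capacity bound
`λ_t^L = sup_{θ>0} { 1 − log(b_{γθ})/(γθ) + log(ε)/(tθ) − c_K(t)/(tθ) }`
converges to the asymptotic capacity `1 − q` as `t → ∞`. -/
theorem stmt8 (q ε : ℝ) (hq : q ∈ Set.Ioo (0 : ℝ) 1) (hε : ε ∈ Set.Ioo (0 : ℝ) 1)
    (γ kmax : ℕ) (hγ : 1 ≤ γ) (hkmax : 1 ≤ kmax)
    (π' : ℕ → ℝ) (hπ'0 : ∀ k ∈ Finset.Icc 1 kmax, 0 ≤ π' k)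
    (hπ'1 : ∑ k ∈ Finset.Icc 1 kmax, π' k = 1) :
    Filter.Tendsto (fun t : ℕ =>
        sSup {x : ℝ | ∃ θ : ℝ, 0 < θ ∧
          x = 1 - Real.log (1 + q * (Real.exp ((γ : ℝ) * θ) - 1)) / ((γ : ℝ) * θ)
              + Real.log ε / ((t : ℝ) * θ)
              - (∑ k ∈ Finset.Icc 1 kmax,
                  π' k * Real.log ((Nat.choose (t + k - 1) (k - 1) : ℝ)))
                / ((t : ℝ) * θ)})
      Filter.atTop (nhds (1 - q)) :=
  stmt8_general q ε hq hε γ kmax hγ π' hπ'0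
end

section
/- Let n ≥ 2 an integer and π = (π_2,…,π_n) a probability vector on {2,…,n} with mean m = Σ_{l=2}^n l·π_l (so m ≥ 2), and choose the transmission probability p = 1/m. Then the asymptotic per-flow capacity λ = Σ_{l=2}^n π_l · (1/m)(1 − 1/m)^{l−1} satisfies 1/(e·m) ≤ λ ≤ 1/m. In particular, with p = 1/E[N] the capacity scales as Θ(1/E[N]). -/
/-!
Write `q = 1 - 1/m`, so that the capacity is `(1/m) ∑ π_l q^(l-1)`. The upper bound is `q ≤ 1`.
For the lower bound, `t ↦ q^t` is convex, so by Jensen `∑ π_l q^(l-1) ≥ q^(m-1)`, and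
`q^(m-1) = (1 + 1/(m-1))^-(m-1) ≥ e⁻¹` because `1 + x ≤ eˣ`.
-/

open Finset

section

-- `open Real` is kept local: it would turn the variable `π` of the theorem into `Real.pi`.
open Real

variable {ι : Type*} {s : Finset ι} {w x : ι → ℝ}

lemma le_sum_mul_of_forall_le {a : ℝ} (hw0 : ∀ i ∈ s, 0 ≤ w i) (hw1 : ∑ i ∈ s, w i = 1)
    (hx : ∀ i ∈ s, a ≤ x i) : a ≤ ∑ i ∈ s, w i * x i :=
  calc a = ∑ i ∈ s, w i * a := by rw [← sum_mul, hw1, one_mul]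
    _ ≤ ∑ i ∈ s, w i * x i := sum_le_sum fun i hi => mul_le_mul_of_nonneg_left (hx i hi) (hw0 i hi)

lemma rpow_sum_mul_le_sum_mul_rpow {q : ℝ} (hq : 0 < q) (hw0 : ∀ i ∈ s, 0 ≤ w i)
    (hw1 : ∑ i ∈ s, w i = 1) : q ^ (∑ i ∈ s, w i * x i) ≤ ∑ i ∈ s, w i * q ^ x i := by
  simpa only [smul_eq_mul] using
    (convexOn_rpow_left hq).map_sum_le hw0 hw1 (fun i _ => Set.mem_univ (x i))

lemma exp_neg_one_le_one_sub_inv_rpow {m : ℝ} (hm : 1 < m) :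
    exp (-1) ≤ (1 - 1 / m) ^ (m - 1) := by
  have hm1 : 0 < m - 1 := by linarith
  have hbase : 1 - 1 / m = (1 + 1 / (m - 1))⁻¹ := by
    rw [one_add_div hm1.ne', sub_add_cancel, inv_div, sub_div, div_self (by positivity)]
  have hpow : (1 + 1 / (m - 1)) ^ (m - 1) ≤ exp 1 :=
    calc (1 + 1 / (m - 1)) ^ (m - 1) ≤ exp (1 / (m - 1)) ^ (m - 1) := by
          gcongr
          linarith [add_one_le_exp (1 / (m - 1))]
      _ = exp 1 := by rw [← exp_mul, one_div_mul_cancel hm1.ne']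
  rw [hbase, inv_rpow (by positivity), exp_neg]
  exact inv_anti₀ (by positivity) hpow

end

theorem stmt11_general (n : ℕ)
    (π : ℕ → ℝ) (hπ0 : ∀ l ∈ Finset.Icc 2 n, 0 ≤ π l)
    (hπ1 : ∑ l ∈ Finset.Icc 2 n, π l = 1)
    (m : ℝ) (hm : m = ∑ l ∈ Finset.Icc 2 n, (l : ℝ) * π l) :
    1 / (Real.exp 1 * m) ≤
        ∑ l ∈ Finset.Icc 2 n, π l * ((1 / m) * (1 - 1 / m) ^ (l - 1)) ∧
      ∑ l ∈ Finset.Icc 2 n, π l * ((1 / m) * (1 - 1 / m) ^ (l - 1)) ≤ 1 / m := by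
  have hm2 : 2 ≤ m := by
    simp only [hm, mul_comm _ (π _)]
    exact le_sum_mul_of_forall_le hπ0 hπ1 fun l hl => by exact_mod_cast (mem_Icc.mp hl).1
  set q := 1 - 1 / m
  have hq0 : 0 < q := by linarith [one_div_le_one_div_of_le two_pos hm2]
  have hq1 : q ≤ 1 := by linarith [one_div_pos.mpr (by linarith : (0 : ℝ) < m)]
  have hcap : ∑ l ∈ Icc 2 n, π l * (1 / m * q ^ (l - 1)) =
      1 / m * ∑ l ∈ Icc 2 n, π l * q ^ (l - 1) := by
    rw [mul_sum]; exact sum_congr rfl fun l _ => by ring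
  have hmean : m - 1 = ∑ l ∈ Icc 2 n, π l * ((l : ℝ) - 1) := by
    simp only [mul_sub, mul_one, sum_sub_distrib, hπ1, hm]
    simp only [mul_comm]
  have hjensen : q ^ (m - 1) ≤ ∑ l ∈ Icc 2 n, π l * q ^ (l - 1) := by
    rw [hmean]
    refine (rpow_sum_mul_le_sum_mul_rpow hq0 hπ0 hπ1).trans_eq (sum_congr rfl fun l hl => ?_)
    rw [← Nat.cast_one, ← Nat.cast_sub (by have := (mem_Icc.mp hl).1; omega), Real.rpow_natCast]
  rw [hcap]
  constructor
  · calc 1 / (Real.exp 1 * m) = 1 / m * Real.exp (-1) := by rw [Real.exp_neg]; field_simp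
      _ ≤ _ := by gcongr; exact (exp_neg_one_le_one_sub_inv_rpow (by linarith)).trans hjensen
  · calc 1 / m * ∑ l ∈ Icc 2 n, π l * q ^ (l - 1) ≤ 1 / m * ∑ l ∈ Icc 2 n, π l := by
          gcongr with l hl
          exact mul_le_of_le_one_right (hπ0 l hl) (pow_le_one₀ hq0.le hq1)
      _ = 1 / m := by rw [hπ1, mul_one]

/-- with the mean-optimized fixed transmission probability `p = 1/E[N]`,
the asymptotic per-flow capacity `λ = ∑ π_l (1/m)(1−1/m)^{l−1}` satisfies
`1/(e·m) ≤ λ ≤ 1/m`, i.e., it scales as `Θ(1/E[N])`. -/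
theorem stmt11 (n : ℕ) (hn : 2 ≤ n)
    (π : ℕ → ℝ) (hπ0 : ∀ l ∈ Finset.Icc 2 n, 0 ≤ π l)
    (hπ1 : ∑ l ∈ Finset.Icc 2 n, π l = 1)
    (m : ℝ) (hm : m = ∑ l ∈ Finset.Icc 2 n, (l : ℝ) * π l) :
    1 / (Real.exp 1 * m) ≤
        ∑ l ∈ Finset.Icc 2 n, π l * ((1 / m) * (1 - 1 / m) ^ (l - 1)) ∧
      ∑ l ∈ Finset.Icc 2 n, π l * ((1 / m) * (1 - 1 / m) ^ (l - 1)) ≤ 1 / m :=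
  stmt11_general n π hπ0 hπ1 m hm
end

section
/- For each integer n ≥ 3 let π be the uniform distribution on {2,…,n}, i.e., π_l = 1/(n−1) for l = 2,…,n, and let G(n) = ( Σ_{l=2}^n l·π_l ) · ( Σ_{l=2}^n π_l/l ) be the randomness gain. Then lim_{n→∞} G(n)/log n = 1/2; in particular the randomness gain of the uniform distribution is Θ(log n). -/
/-- The randomness gain `E[N]·E[1/N]` of the uniform distribution
`π_l = 1/(n−1)` on `{2,…,n}`. -/
noncomputable def uniformGain (n : ℕ) : ℝ :=
  (∑ l ∈ Finset.Icc 2 n, (l : ℝ) * (1 / ((n : ℝ) - 1))) *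
    (∑ l ∈ Finset.Icc 2 n, (1 / ((n : ℝ) - 1)) / (l : ℝ))

/-!
Both factors are explicit: `E[N] = (n + 2) / 2` and `E[1/N] = (H_n - 1) / (n - 1)`, where `H_n` is
the harmonic number. Hence `G(n) = (n + 2) / (2 (n - 1)) · (H_n - 1)`, whose first factor tends
to `1/2` while `H_n - 1 ~ log n` because `H_n - log n` converges (to Euler's constant).
A positive limit of `G(n) / log n` then yields the two-sided `Θ(log n)` bounds.
-/

open Finset Filter Topology Real

lemma sum_Icc_two_natCast (n : ℕ) (hn : 1 ≤ n) :
    ∑ l ∈ Icc 2 n, (l : ℝ) = ((n : ℝ) - 1) * (n + 2) / 2 := by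
  induction n, hn using Nat.le_induction with
  | base => simp
  | succ m hm ih =>
    rw [sum_Icc_succ_top (by omega), ih]
    push_cast
    ring

lemma sum_Icc_two_inv_natCast (n : ℕ) (hn : 1 ≤ n) :
    ∑ l ∈ Icc 2 n, (l : ℝ)⁻¹ = harmonic n - 1 := by
  induction n, hn using Nat.le_induction with
  | base => simp
  | succ m hm ih =>
    rw [sum_Icc_succ_top (by omega), ih, harmonic_succ]
    push_cast
    ring

lemma uniformGain_eq {n : ℕ} (hn : 2 ≤ n) :
    uniformGain n = (n + 2) / (2 * ((n : ℝ) - 1)) * (harmonic n - 1) := by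
  have hn' : (n : ℝ) - 1 ≠ 0 := by
    have : (2 : ℝ) ≤ n := by exact_mod_cast hn
    linarith
  simp only [uniformGain, ← sum_mul, div_eq_mul_inv (1 / ((n : ℝ) - 1)), ← mul_sum]
  rw [sum_Icc_two_natCast n (by omega), sum_Icc_two_inv_natCast n (by omega)]
  field_simp

lemma tendsto_natCast_add_two_div_two_mul_sub_one :
    Tendsto (fun n : ℕ => ((n : ℝ) + 2) / (2 * ((n : ℝ) - 1))) atTop (𝓝 (1 / 2)) := by
  have hden : Tendsto (fun n : ℕ => 2 * ((n : ℝ) - 1)) atTop atTop :=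
    (tendsto_atTop_add_const_right _ (-1) tendsto_natCast_atTop_atTop).const_mul_atTop two_pos
      |>.congr fun n => by ring_nf
  have h := (tendsto_const_nhds (x := (3 : ℝ)).div_atTop hden).const_add (1 / 2)
  rw [add_zero] at h
  refine h.congr' ?_
  filter_upwards [eventually_ge_atTop 2] with n hn
  have : (n : ℝ) - 1 ≠ 0 := by
    have : (2 : ℝ) ≤ n := by exact_mod_cast hn
    linarith
  field_simp
  ring

lemma tendsto_harmonic_sub_one_div_log :
    Tendsto (fun n : ℕ => ((harmonic n : ℝ) - 1) / log n) atTop (𝓝 1) := by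
  have hlog : Tendsto (fun n : ℕ => log n) atTop atTop :=
    tendsto_log_atTop.comp tendsto_natCast_atTop_atTop
  have h := ((tendsto_harmonic_sub_log.sub_const 1).div_atTop hlog).const_add 1
  rw [add_zero] at h
  refine h.congr' ?_
  filter_upwards [hlog.eventually_gt_atTop 0] with n hn
  field_simp
  ring

lemma eventually_le_and_le_of_tendsto_div {α : Type*} {l : Filter α} {f g : α → ℝ} {L : ℝ}
    (hL : 0 < L) (h : Tendsto (fun x => f x / g x) l (𝓝 L)) (hg : ∀ᶠ x in l, 0 < g x) :
    ∀ᶠ x in l, L / 2 * g x ≤ f x ∧ f x ≤ 2 * L * g x := by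
  filter_upwards [h (Ioo_mem_nhds (half_lt_self hL) (lt_two_mul_self hL)), hg] with x hx hgx
  exact ⟨(le_div_iff₀ hgx).1 hx.1.le, (div_le_iff₀ hgx).1 hx.2.le⟩

/-- for the uniform distribution on `{2,…,n}`, the randomness gain
`G(n) = E[N]·E[1/N]` satisfies `lim_{n→∞} G(n)/log n = 1/2`; in particular
`G(n) = Θ(log n)`. -/
theorem stmt13 :
    Filter.Tendsto (fun n : ℕ => uniformGain n / Real.log n)
        Filter.atTop (nhds (1 / 2)) ∧
      ∃ c₁ c₂ : ℝ, 0 < c₁ ∧ 0 < c₂ ∧ ∃ n₀ : ℕ, ∀ n : ℕ, n₀ ≤ n →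
        c₁ * Real.log n ≤ uniformGain n ∧ uniformGain n ≤ c₂ * Real.log n := by
  have hlim : Tendsto (fun n : ℕ => uniformGain n / log n) atTop (𝓝 (1 / 2)) := by
    have h := tendsto_natCast_add_two_div_two_mul_sub_one.mul tendsto_harmonic_sub_one_div_log
    rw [mul_one] at h
    refine h.congr' ?_
    filter_upwards [eventually_ge_atTop 2] with n hn
    rw [uniformGain_eq hn, mul_div_assoc]
  have hlog_pos : ∀ᶠ n : ℕ in atTop, 0 < log n :=
    (tendsto_log_atTop.comp tendsto_natCast_atTop_atTop).eventually_gt_atTop 0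
  exact ⟨hlim, _, _, by norm_num, by norm_num,
    eventually_atTop.1 (eventually_le_and_le_of_tendsto_div (by norm_num) hlim hlog_pos)⟩
end

section
/- Fix α ∈ (0,1). For each integer n large enough that 2 ≤ αn ≤ n, let m = αn and let π be the gain-maximizing bimodal distribution on {2,…,n}: π_2 = (n−m)/(n−2), π_n = (m−2)/(n−2), π_i = 0 otherwise (which has mean m). Let G(n) = m·( (1/2)·(n−m)/(n−2) + (1/n)·(m−2)/(n−2) ) be its randomness gain E[N]·E[1/N]. Then lim_{n→∞} G(n)/n = α(1−α)/2; in particular, with E[N] = Θ(n), the gain-maximizing distribution achieves randomness gain Θ(n). -/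
/-!
Dividing numerator and denominator by `n`, the normalized gain `G(n)/n` becomes a rational
function of `t = 1/n` whose denominator `1 - 2t` does not vanish at `t = 0`; its value there
is `α(1-α)/2`, and continuity gives the limit.
-/

open Filter Topology

lemma gain_div_self_eq (α x : ℝ) (hx : x ≠ 0) (hx2 : x - 2 ≠ 0) :
    α * x * ((1 / 2) * ((x - α * x) / (x - 2)) + (1 / x) * ((α * x - 2) / (x - 2))) / x =
      α * ((1 - α) / 2 + x⁻¹ * (α - 2 * x⁻¹)) / (1 - 2 * x⁻¹) := by
  have h : 1 - 2 * x⁻¹ = (x - 2) / x := by field_simp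
  rw [h]
  field_simp

lemma tendsto_gain_rational_nhds_zero (α : ℝ) :
    Tendsto (fun t : ℝ => α * ((1 - α) / 2 + t * (α - 2 * t)) / (1 - 2 * t))
      (𝓝 0) (𝓝 (α * (1 - α) / 2)) := by
  have hcont :
      ContinuousAt (fun t : ℝ => α * ((1 - α) / 2 + t * (α - 2 * t)) / (1 - 2 * t)) 0 := by
    fun_prop (disch := norm_num)
  simpa [mul_div_assoc] using hcont.tendsto

theorem stmt15_general (α : ℝ) :
    Filter.Tendsto (fun n : ℕ =>
        (α * (n : ℝ) *
          ((1 / 2) * (((n : ℝ) - α * (n : ℝ)) / ((n : ℝ) - 2)) +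
            (1 / (n : ℝ)) * ((α * (n : ℝ) - 2) / ((n : ℝ) - 2)))) / (n : ℝ))
      Filter.atTop (nhds (α * (1 - α) / 2)) := by
  have hlim := (tendsto_gain_rational_nhds_zero α).comp tendsto_inv_atTop_nhds_zero_nat
  refine hlim.congr' ?_
  filter_upwards [eventually_ge_atTop 3] with n hn
  have hn3 : (3 : ℝ) ≤ n := by exact_mod_cast hn
  exact (gain_div_self_eq α n (by positivity) (by linarith)).symm

/-- for the gain-maximizing bimodal distribution on `{2,…,n}` with
mean `m = αn` (atoms `π₂ = (n−m)/(n−2)` and `πₙ = (m−2)/(n−2)`), the randomness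
gain `G(n) = E[N]·E[1/N] = m·((1/2)(n−m)/(n−2) + (1/n)(m−2)/(n−2))` satisfies
`lim_{n→∞} G(n)/n = α(1−α)/2`; in particular the gain is `Θ(n)`. -/
theorem stmt15 (α : ℝ) (hα : α ∈ Set.Ioo (0 : ℝ) 1) :
    Filter.Tendsto (fun n : ℕ =>
        (α * (n : ℝ) *
          ((1 / 2) * (((n : ℝ) - α * (n : ℝ)) / ((n : ℝ) - 2)) +
            (1 / (n : ℝ)) * ((α * (n : ℝ) - 2) / ((n : ℝ) - 2)))) / (n : ℝ))
      Filter.atTop (nhds (α * (1 - α) / 2)) :=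
  stmt15_general α
end

section
/- For each integer k ≥ 2 let π̃ be the heavy-tailed distribution π̃_l = κ_k/l² for l = 1,…,k, where κ_k = ( Σ_{l=1}^k 1/l² )^{−1}, and define the hop-randomness gain H(k) = log( Σ_{l=1}^k l·π̃_l ) − Σ_{l=1}^k π̃_l·log l. Then lim_{k→∞} H(k)/log(log k) = 1; in particular E[K] = Θ(log k), E[log K] converges to a finite constant as k → ∞ (using the convergence of Σ_{l≥1} (log l)/l²), and the gain is Θ(log log k). -/
/-- The heavy-tailed hop-count distribution `π̃_l = κ_k / l²` on `{1,…,k}`,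
with normalization `κ_k = (∑_{j=1}^k 1/j²)⁻¹`. -/
noncomputable def hopPi (k l : ℕ) : ℝ :=
  (∑ j ∈ Finset.Icc 1 k, 1 / (j : ℝ) ^ 2)⁻¹ / (l : ℝ) ^ 2

/-- `E[K]` under the heavy-tailed hop-count distribution. -/
noncomputable def hopEK (k : ℕ) : ℝ := ∑ l ∈ Finset.Icc 1 k, (l : ℝ) * hopPi k l

/-- `E[log K]` under the heavy-tailed hop-count distribution. -/
noncomputable def hopElogK (k : ℕ) : ℝ :=
  ∑ l ∈ Finset.Icc 1 k, hopPi k l * Real.log l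

/-- The hop-randomness gain `H(k) = log E[K] − E[log K]`. -/
noncomputable def hopGain (k : ℕ) : ℝ := Real.log (hopEK k) - hopElogK k
/-! With `S_k = ∑_{j ≤ k} 1/j²` and `H_k` the `k`-th harmonic number, `E[K] = H_k / S_k` and
`E[log K] = (∑_{l ≤ k} log l / l²) / S_k`. Since `S_k → π²/6`, `H_k - log k → γ` and
`∑ log l / l²` converges, `E[K] / log k → 6/π²` and `E[log K]` has a finite limit. Hence
`H(k) - log log k = log (E[K] / log k) - E[log K]` converges, and dividing by `log log k → ∞`
gives the limit `1`. -/

open Filter Finset Real Topology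

lemma tendsto_sum_Icc_one_of_hasSum {f : ℕ → ℝ} {a : ℝ} (hf : HasSum f a) (h0 : f 0 = 0) :
    Tendsto (fun k => ∑ j ∈ Icc 1 k, f j) atTop (𝓝 a) := by
  have hshift : HasSum (fun n => f (n + 1)) a := by
    simpa [h0] using (hasSum_nat_add_iff' 1).mpr hf
  refine hshift.tendsto_sum_nat.congr fun k => ?_
  rw [← Ico_add_one_right_eq_Icc, sum_Ico_eq_sum_range, Nat.add_sub_cancel]
  simp only [add_comm 1]

lemma summable_log_div_sq : Summable fun n : ℕ => log n / (n : ℝ) ^ 2 := by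
  have hmaj : Summable fun n : ℕ => 2 * (n : ℝ) ^ (-3 / 2 : ℝ) :=
    (Real.summable_nat_rpow.mpr (by norm_num)).mul_left 2
  refine hmaj.of_nonneg_of_le (fun n => by positivity) fun n => ?_
  rcases Nat.eq_zero_or_pos n with rfl | hn
  · simp
  have hn' : (0 : ℝ) < n := by exact_mod_cast hn
  calc log n / (n : ℝ) ^ 2 ≤ (n : ℝ) ^ (1 / 2 : ℝ) / (1 / 2) / (n : ℝ) ^ 2 := by
        gcongr
        exact log_le_rpow_div hn'.le (by norm_num)
    _ = 2 * (n : ℝ) ^ (-3 / 2 : ℝ) := by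
        rw [show (-3 / 2 : ℝ) = 1 / 2 - 2 by norm_num, rpow_sub hn', rpow_two]
        ring

lemma tendsto_div_of_tendsto_sub {α : Type*} {l : Filter α} {f g : α → ℝ} {c : ℝ}
    (hfg : Tendsto (fun x => f x - g x) l (𝓝 c)) (hg : Tendsto g l atTop) :
    Tendsto (fun x => f x / g x) l (𝓝 1) := by
  have h := (hfg.div_atTop hg).add_const 1
  rw [zero_add] at h
  refine h.congr' ?_
  filter_upwards [hg.eventually_ne_atTop 0] with x hx
  field_simp
  ring

lemma eventually_le_mul_and_le_mul_of_tendsto_div {α : Type*} {l : Filter α} {f g : α → ℝ}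
    {L : ℝ} (h : Tendsto (fun x => f x / g x) l (𝓝 L)) (hL : 0 < L) (hg : ∀ᶠ x in l, 0 < g x) :
    ∀ᶠ x in l, L / 2 * g x ≤ f x ∧ f x ≤ 2 * L * g x := by
  filter_upwards [h.eventually (lt_mem_nhds (by linarith : L / 2 < L)),
    h.eventually (gt_mem_nhds (by linarith : L < 2 * L)), hg] with x hlo hhi hgx
  rw [lt_div_iff₀ hgx] at hlo
  rw [div_lt_iff₀ hgx] at hhi
  exact ⟨hlo.le, hhi.le⟩

lemma tendsto_log_natCast_atTop : Tendsto (fun n : ℕ => log n) atTop atTop :=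
  tendsto_log_atTop.comp tendsto_natCast_atTop_atTop

lemma tendsto_harmonic_div_log :
    Tendsto (fun n : ℕ => (harmonic n : ℝ) / log n) atTop (𝓝 1) :=
  tendsto_div_of_tendsto_sub tendsto_harmonic_sub_log tendsto_log_natCast_atTop

noncomputable def invSqSum (k : ℕ) : ℝ := ∑ j ∈ Icc 1 k, 1 / (j : ℝ) ^ 2

noncomputable def logDivSqSum (k : ℕ) : ℝ := ∑ j ∈ Icc 1 k, log j / (j : ℝ) ^ 2

lemma tendsto_invSqSum : Tendsto invSqSum atTop (𝓝 (π ^ 2 / 6)) :=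
  tendsto_sum_Icc_one_of_hasSum hasSum_zeta_two (by simp)

lemma tendsto_logDivSqSum :
    Tendsto logDivSqSum atTop (𝓝 (∑' n : ℕ, log n / (n : ℝ) ^ 2)) :=
  tendsto_sum_Icc_one_of_hasSum summable_log_div_sq.hasSum (by simp)

lemma hopEK_eq_harmonic_div (k : ℕ) : hopEK k = harmonic k / invSqSum k := by
  rw [hopEK, harmonic_eq_sum_Icc, invSqSum, div_eq_mul_inv, Rat.cast_sum, sum_mul]
  refine sum_congr rfl fun l _ => ?_
  rw [hopPi]
  push_cast
  by_cases hl : (l : ℝ) = 0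
  · simp [hl]
  · field_simp

lemma hopElogK_eq_logDivSqSum_div (k : ℕ) : hopElogK k = logDivSqSum k / invSqSum k := by
  rw [hopElogK, logDivSqSum, div_eq_mul_inv, sum_mul]
  refine sum_congr rfl fun l _ => ?_
  rw [hopPi, invSqSum]
  ring

lemma tendsto_hopEK_div_log :
    Tendsto (fun k : ℕ => hopEK k / log k) atTop (𝓝 (6 / π ^ 2)) := by
  have h := tendsto_harmonic_div_log.div tendsto_invSqSum (by positivity)
  rw [one_div_div] at h
  refine h.congr fun k => ?_
  rw [Pi.div_apply, hopEK_eq_harmonic_div]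
  ring

lemma tendsto_hopElogK :
    Tendsto hopElogK atTop (𝓝 ((∑' n : ℕ, log n / (n : ℝ) ^ 2) / (π ^ 2 / 6))) :=
  (tendsto_logDivSqSum.div tendsto_invSqSum (by positivity)).congr fun k =>
    (hopElogK_eq_logDivSqSum_div k).symm

lemma tendsto_hopGain_sub_log_log :
    Tendsto (fun k : ℕ => hopGain k - log (log k)) atTop
      (𝓝 (log (6 / π ^ 2) - (∑' n : ℕ, log n / (n : ℝ) ^ 2) / (π ^ 2 / 6))) := by
  refine ((tendsto_hopEK_div_log.log (by positivity)).sub tendsto_hopElogK).congr' ?_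
  -- a nonzero limit makes `E[K] / log k` eventually nonzero, hence both `log`s split
  filter_upwards [tendsto_hopEK_div_log.eventually_ne (by positivity : 6 / π ^ 2 ≠ 0)] with k hk
  obtain ⟨hEK, hlog⟩ := div_ne_zero_iff.mp hk
  rw [hopGain, log_div hEK hlog]
  ring

/-- for the heavy-tailed hop-count distribution `π̃_l = κ_k/l²` on
`{1,…,k}`, the hop-randomness gain `H(k) = log E[K] − E[log K]` satisfies
`lim_{k→∞} H(k)/log(log k) = 1`; in particular `E[K] = Θ(log k)`,
`E[log K]` converges to a finite constant, and the gain is `Θ(log log k)`. -/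
theorem stmt16 :
    Filter.Tendsto (fun k : ℕ => hopGain k / Real.log (Real.log k))
        Filter.atTop (nhds 1) ∧
      (∃ c₁ c₂ : ℝ, 0 < c₁ ∧ 0 < c₂ ∧ ∃ k₀ : ℕ, ∀ k : ℕ, k₀ ≤ k →
        c₁ * Real.log k ≤ hopEK k ∧ hopEK k ≤ c₂ * Real.log k) ∧
      (∃ C : ℝ, Filter.Tendsto hopElogK Filter.atTop (nhds C)) := by
  have hbounds := eventually_le_mul_and_le_mul_of_tendsto_div tendsto_hopEK_div_log
    (by positivity) (tendsto_log_natCast_atTop.eventually_gt_atTop 0)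
  obtain ⟨k₀, hk₀⟩ := eventually_atTop.mp hbounds
  have hloglog := tendsto_log_atTop.comp tendsto_log_natCast_atTop
  exact ⟨tendsto_div_of_tendsto_sub tendsto_hopGain_sub_log_log hloglog,
    ⟨_, _, by positivity, by positivity, k₀, hk₀⟩, ⟨_, tendsto_hopElogK⟩⟩
end

section
/- For each integer n ≥ 3 let π be the harmonic distribution π_l = κ_n/(l·log n) for l = 2,…,n, where κ_n = log n · ( Σ_{l=2}^n 1/l )^{−1} is the normalization constant, and let G(n) = ( Σ_{l=2}^n l·π_l ) · ( Σ_{l=2}^n π_l/l ). Then there exist constants c_1, c_2 > 0 and n_0 such that c_1 · n/(log n)² ≤ G(n) ≤ c_2 · n/(log n)² for all n ≥ n_0; moreover E[N] = Θ(n/log n) and E[1/N] = Θ(1/log n). -/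
/-!
After cancelling `log n`, `π_l = 1/(H l)` with `H = ∑_{j=2}^n 1/j = harmonic n - 1`, so
`E[N] = (n - 1)/H` and `E[1/N] = (∑_{l=2}^n 1/l²)/H`. The harmonic bounds
`log n ≤ harmonic n ≤ 1 + log n` give `H = Θ(log n)`, while `∑_{l=2}^n 1/l²` lies between its
first term `1/4` and `1`; multiplying the two estimates gives `G(n) = Θ(n/(log n)²)`.
-/

/-- The harmonic node-density distribution on `{2,…,n}`:
`π_l = κ_n/(l·log n)` with normalization `κ_n = log n · (∑_{j=2}^n 1/j)⁻¹`. -/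
noncomputable def harmPi (n l : ℕ) : ℝ :=
  (Real.log n * (∑ j ∈ Finset.Icc 2 n, 1 / (j : ℝ))⁻¹) / ((l : ℝ) * Real.log n)

/-- `E[N]` under the harmonic node-density distribution. -/
noncomputable def harmEN (n : ℕ) : ℝ := ∑ l ∈ Finset.Icc 2 n, (l : ℝ) * harmPi n l

/-- `E[1/N]` under the harmonic node-density distribution. -/
noncomputable def harmEinvN (n : ℕ) : ℝ := ∑ l ∈ Finset.Icc 2 n, harmPi n l / (l : ℝ)

open Finset

lemma sum_Icc_two_one_div_eq_harmonic_sub_one {n : ℕ} (hn : 1 ≤ n) :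
    ∑ j ∈ Icc 2 n, 1 / (j : ℝ) = harmonic n - 1 := by
  have hIcc : Icc 1 n = insert 1 (Icc 2 n) := by
    ext x; simp only [mem_Icc, mem_insert]; omega
  rw [harmonic_eq_sum_Icc, hIcc, sum_insert (by simp)]
  push_cast
  simp [one_div]

lemma log_le_harmonic (n : ℕ) : Real.log n ≤ harmonic n := by
  rcases n.eq_zero_or_pos with rfl | hn
  · simp
  exact (Real.log_le_log (by positivity) (by push_cast; linarith)).trans
    (log_add_one_le_harmonic n)

lemma two_le_log_of_eight_le {x : ℝ} (hx : 8 ≤ x) : 2 ≤ Real.log x := by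
  have hlog8 : Real.log 8 = 3 * Real.log 2 := by
    rw [show (8 : ℝ) = 2 ^ 3 by norm_num, Real.log_pow]; norm_num
  have := Real.log_le_log (by norm_num) hx
  linarith [Real.log_two_gt_d9]

lemma sum_Icc_two_inv_sq_le_one (n : ℕ) : ∑ l ∈ Icc 2 n, ((l : ℝ) ^ 2)⁻¹ ≤ 1 := by
  have hIoo : Ioo 1 (n + 1) = Icc 2 n := by
    ext x; simp only [mem_Ioo, mem_Icc]; omega
  have := sum_Ioo_inv_sq_le (α := ℝ) 1 (n + 1)
  rw [hIoo] at this
  norm_num at this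
  exact this

lemma quarter_le_sum_Icc_two_inv_sq {n : ℕ} (hn : 2 ≤ n) :
    1 / 4 ≤ ∑ l ∈ Icc 2 n, ((l : ℝ) ^ 2)⁻¹ := by
  have hfirst := single_le_sum (f := fun l : ℕ ↦ ((l : ℝ) ^ 2)⁻¹)
    (fun i _ ↦ inv_nonneg.mpr (sq_nonneg (i : ℝ))) (mem_Icc.mpr ⟨le_rfl, hn⟩)
  norm_num at hfirst
  exact hfirst

lemma harmPi_eq {n : ℕ} (hn : 2 ≤ n) (l : ℕ) :
    harmPi n l = ((harmonic n : ℝ) - 1)⁻¹ / l := by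
  have hlog : Real.log n ≠ 0 := (Real.log_pos (by exact_mod_cast hn)).ne'
  rw [harmPi, sum_Icc_two_one_div_eq_harmonic_sub_one (by omega), mul_comm (l : ℝ),
    mul_div_mul_left _ _ hlog]

lemma harmEN_eq {n : ℕ} (hn : 2 ≤ n) : harmEN n = ((n : ℝ) - 1) / (harmonic n - 1) := by
  have hterm : ∀ l ∈ Icc 2 n, (l : ℝ) * harmPi n l = ((harmonic n : ℝ) - 1)⁻¹ := by
    intro l hl
    have hl0 : (l : ℝ) ≠ 0 := by have := (mem_Icc.mp hl).1; positivity
    rw [harmPi_eq hn, mul_div_cancel₀ _ hl0]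
  rw [harmEN, sum_congr rfl hterm, sum_const, Nat.card_Icc, nsmul_eq_mul,
    Nat.cast_sub (by omega), div_eq_mul_inv]
  push_cast
  ring

lemma harmEinvN_eq {n : ℕ} (hn : 2 ≤ n) :
    harmEinvN n = (∑ l ∈ Icc 2 n, ((l : ℝ) ^ 2)⁻¹) / (harmonic n - 1) := by
  rw [harmEinvN, sum_div]
  refine sum_congr rfl fun l _ ↦ ?_
  rw [harmPi_eq hn]
  ring

lemma harmonic_sub_one_bounds {n : ℕ} (hn : 8 ≤ n) :
    Real.log n / 2 ≤ (harmonic n : ℝ) - 1 ∧ (harmonic n : ℝ) - 1 ≤ Real.log n := by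
  have hlog := two_le_log_of_eight_le (x := n) (by exact_mod_cast hn)
  have hupper := harmonic_le_one_add_log n
  have hlower := log_le_harmonic n
  constructor <;> linarith

lemma harmEN_bounds {n : ℕ} (hn : 8 ≤ n) :
    1 / 2 * ((n : ℝ) / Real.log n) ≤ harmEN n ∧ harmEN n ≤ 2 * ((n : ℝ) / Real.log n) := by
  obtain ⟨hH₁, hH₂⟩ := harmonic_sub_one_bounds hn
  have hlog := two_le_log_of_eight_le (x := n) (by exact_mod_cast hn)
  have hn8 : (8 : ℝ) ≤ n := by exact_mod_cast hn
  rw [harmEN_eq (by omega)]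
  constructor
  · calc 1 / 2 * ((n : ℝ) / Real.log n) = (n / 2) / Real.log n := by ring
      _ ≤ (n - 1) / (harmonic n - 1) := div_le_div₀ (by linarith) (by linarith) (by linarith) hH₂
  · calc ((n : ℝ) - 1) / (harmonic n - 1) ≤ n / (Real.log n / 2) :=
          div_le_div₀ (by linarith) (by linarith) (by linarith) hH₁
      _ = 2 * ((n : ℝ) / Real.log n) := by ring

lemma harmEinvN_bounds {n : ℕ} (hn : 8 ≤ n) :
    1 / 4 / Real.log n ≤ harmEinvN n ∧ harmEinvN n ≤ 2 / Real.log n := by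
  obtain ⟨hH₁, hH₂⟩ := harmonic_sub_one_bounds hn
  have hlog := two_le_log_of_eight_le (x := n) (by exact_mod_cast hn)
  have hS₁ := quarter_le_sum_Icc_two_inv_sq (n := n) (by omega)
  have hS₂ := sum_Icc_two_inv_sq_le_one n
  rw [harmEinvN_eq (by omega)]
  constructor
  · exact div_le_div₀ (by linarith) hS₁ (by linarith) hH₂
  · calc (∑ l ∈ Icc 2 n, ((l : ℝ) ^ 2)⁻¹) / (harmonic n - 1) ≤ 1 / (Real.log n / 2) :=
          div_le_div₀ zero_le_one hS₂ (by linarith) hH₁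
      _ = 2 / Real.log n := by ring

/-- for the harmonic node-density distribution `π_l = κ_n/(l log n)`
on `{2,…,n}`, the randomness gain `G(n) = E[N]·E[1/N]` is `Θ(n/(log n)²)`;
moreover `E[N] = Θ(n/log n)` and `E[1/N] = Θ(1/log n)`. -/
theorem stmt18 :
    (∃ c₁ c₂ : ℝ, 0 < c₁ ∧ 0 < c₂ ∧ ∃ n₀ : ℕ, ∀ n : ℕ, n₀ ≤ n →
        c₁ * ((n : ℝ) / Real.log n ^ 2) ≤ harmEN n * harmEinvN n ∧
          harmEN n * harmEinvN n ≤ c₂ * ((n : ℝ) / Real.log n ^ 2)) ∧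
      (∃ d₁ d₂ : ℝ, 0 < d₁ ∧ 0 < d₂ ∧ ∃ n₁ : ℕ, ∀ n : ℕ, n₁ ≤ n →
        d₁ * ((n : ℝ) / Real.log n) ≤ harmEN n ∧
          harmEN n ≤ d₂ * ((n : ℝ) / Real.log n)) ∧
      (∃ e₁ e₂ : ℝ, 0 < e₁ ∧ 0 < e₂ ∧ ∃ n₂ : ℕ, ∀ n : ℕ, n₂ ≤ n →
        e₁ / Real.log n ≤ harmEinvN n ∧ harmEinvN n ≤ e₂ / Real.log n) := by
  refine ⟨⟨1 / 8, 4, by norm_num, by norm_num, 8, fun n hn ↦ ?_⟩,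
    ⟨1 / 2, 2, by norm_num, by norm_num, 8, fun n hn ↦ harmEN_bounds hn⟩,
    ⟨1 / 4, 2, by norm_num, by norm_num, 8, fun n hn ↦ harmEinvN_bounds hn⟩⟩
  obtain ⟨hN₁, hN₂⟩ := harmEN_bounds hn
  obtain ⟨hI₁, hI₂⟩ := harmEinvN_bounds hn
  have hlog := two_le_log_of_eight_le (x := n) (by exact_mod_cast hn)
  have hsplit (a b : ℝ) : a * b * ((n : ℝ) / Real.log n ^ 2) =
      a * ((n : ℝ) / Real.log n) * (b / Real.log n) := by ring
  constructor
  · rw [show (1 / 8 : ℝ) = 1 / 2 * (1 / 4) by norm_num, hsplit]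
    exact mul_le_mul hN₁ hI₁ (by positivity) ((by positivity : (0 : ℝ) ≤ _).trans hN₁)
  · rw [show (4 : ℝ) = 2 * 2 by norm_num, hsplit]
    exact mul_le_mul hN₂ hI₂ ((by positivity : (0 : ℝ) ≤ _).trans hI₁) (by positivity)
end
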